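/- arXiv:2008.11163 — 2 statements merged into one kernel-verified Lean document; each statement's English description precedes it below -/
import Mathlib

section
/- Let p ≡ 1 (mod 3) be a prime, n ≥ 2, D ≥ 1, and α₁, α₂, α₃ integers with max(|α₁|,|α₂|,|α₃|) ≤ D. Assume p^{n/2} > 20D³ and let u₀ be a primitive cube root of unity modulo p^{⌊n/2⌋}. Then either α₁ = α₂ = α₃, or ν_p(α₁ + α₂u₀ + α₃u₀²) ≤ ⌈log(20D³)/log p⌉, where ν_p denotes the p-adic valuation. -/
set_option maxHeartbeats 1000000


/-- Let `p ≡ 1 (mod 3)` be prime, `n ≥ 2`, `D ≥ 1`, and `α₁, α₂, α₃` integers bounded by `D`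
in absolute value. If `p^{n/2} > 20 D³` and `u₀` is a primitive cube root of unity modulo
`p^⌊n/2⌋`, then either `α₁ = α₂ = α₃`, or
`ν_p(α₁ + α₂ u₀ + α₃ u₀²) ≤ ⌈log(20 D³)/log p⌉` (expressed via non-divisibility by
`p^{⌈log(20D³)/log p⌉ + 1}`). -/
theorem padic_valuation_cube_root_combination (p : ℕ) (hp : p.Prime) (hp3 : p % 3 = 1)
    (n : ℕ) (hn : 2 ≤ n) (D : ℕ) (hD : 1 ≤ D)
    (α₁ α₂ α₃ : ℤ) (h₁ : |α₁| ≤ (D : ℤ)) (h₂ : |α₂| ≤ (D : ℤ)) (h₃ : |α₃| ≤ (D : ℤ))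
    (hbig : 20 * (D : ℝ) ^ 3 < (p : ℝ) ^ ((n : ℝ) / 2))
    (u₀ : ℤ) (hu₀ : ((u₀ : ZMod (p ^ (n / 2))) ^ 3 = 1))
    (hu₀' : (u₀ : ZMod (p ^ (n / 2))) ≠ 1) :
    (α₁ = α₂ ∧ α₂ = α₃) ∨
      ¬ ((p : ℤ) ^ (⌈Real.log (20 * (D : ℝ) ^ 3) / Real.log p⌉₊ + 1) ∣
          (α₁ + α₂ * u₀ + α₃ * u₀ ^ 2)) := by
  by_contra hcon
  push_neg at hcon
  obtain ⟨hne, hdvd⟩ := hcon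
  set m : ℕ := n / 2 with hm_def
  set k : ℕ := ⌈Real.log (20 * (D : ℝ) ^ 3) / Real.log p⌉₊ + 1 with hk_def
  have hm1 : 1 ≤ m := by omega
  have hp1 : 1 < p := hp.one_lt
  have hpR1 : (1 : ℝ) < (p : ℝ) := by exact_mod_cast hp1
  have hpR0 : (0 : ℝ) < (p : ℝ) := by linarith
  have hDR : (1 : ℝ) ≤ (D : ℝ) := by exact_mod_cast hD
  -- p^m divides u₀^3 - 1
  have hd1 : ((p : ℤ) ^ m) ∣ (u₀ ^ 3 - 1) := by
    have : (((u₀ ^ 3 - 1 : ℤ) : ZMod (p ^ m)) = 0) := by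
      push_cast
      rw [hu₀]; ring
    have := (ZMod.intCast_zmod_eq_zero_iff_dvd _ _).mp this
    exact_mod_cast this
  -- p^m does not divide u₀ - 1
  have hnd : ¬ ((p : ℤ) ^ m) ∣ (u₀ - 1) := by
    intro h
    apply hu₀'
    have h' : (((u₀ - 1 : ℤ) : ZMod (p ^ m)) = 0) := by
      rw [ZMod.intCast_zmod_eq_zero_iff_dvd]
      exact_mod_cast h
    push_cast at h'
    linear_combination h'
  have hpZ : Prime ((p : ℤ)) := by
    rw [Int.prime_iff_natAbs_prime]; simpa using hp
  -- p does not divide u₀ - 1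
  have hA : ¬ ((p : ℤ) ∣ (u₀ - 1)) := by
    intro h
    have hc : ¬ ((p : ℤ) ∣ (u₀ ^ 2 + u₀ + 1)) := by
      intro h2
      have h3 : (p : ℤ) ∣ 3 := by
        have hfac : (u₀ ^ 2 + u₀ + 1) - (u₀ - 1) * (u₀ + 2) = 3 := by ring
        have := dvd_sub h2 (h.mul_right (u₀ + 2))
        rwa [hfac] at this
      have : (p : ℤ) ∣ ((3 : ℕ) : ℤ) := by exact_mod_cast h3
      have hp3' : p ∣ 3 := Int.ofNat_dvd.mp this
      have : p = 3 := (Nat.prime_dvd_prime_iff_eq hp Nat.prime_three).mp hp3'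
      omega
    have hcop : IsCoprime ((p : ℤ) ^ m) (u₀ ^ 2 + u₀ + 1) :=
      ((hpZ.coprime_iff_not_dvd).mpr hc).pow_left
    apply hnd
    have hfac : u₀ ^ 3 - 1 = (u₀ ^ 2 + u₀ + 1) * (u₀ - 1) := by ring
    exact hcop.dvd_of_dvd_mul_left (hfac ▸ hd1)
  -- p^m divides u₀² + u₀ + 1
  have hB : ((p : ℤ) ^ m) ∣ (u₀ ^ 2 + u₀ + 1) := by
    have hcop : IsCoprime ((p : ℤ) ^ m) (u₀ - 1) :=
      ((hpZ.coprime_iff_not_dvd).mpr hA).pow_left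
    have hfac : u₀ ^ 3 - 1 = (u₀ - 1) * (u₀ ^ 2 + u₀ + 1) := by ring
    exact hcop.dvd_of_dvd_mul_left (hfac ▸ hd1)
  set j : ℕ := min k m with hj_def
  have hdvdS : ((p : ℤ) ^ j) ∣ (α₁ + α₂ * u₀ + α₃ * u₀ ^ 2) :=
    dvd_trans (pow_dvd_pow _ (min_le_left k m)) hdvd
  have hdvdc : ((p : ℤ) ^ j) ∣ (u₀ ^ 2 + u₀ + 1) :=
    dvd_trans (pow_dvd_pow _ (min_le_right k m)) hB
  set N : ℤ := α₁ ^ 2 + α₂ ^ 2 + α₃ ^ 2 - α₁ * α₂ - α₂ * α₃ - α₃ * α₁ with hN_def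
  have hdvdN : ((p : ℤ) ^ j) ∣ N := by
    have key : N = (α₁ + α₂ * u₀ + α₃ * u₀ ^ 2) * (α₁ + α₃ * u₀ + α₂ * u₀ ^ 2)
        - (u₀ ^ 2 + u₀ + 1) * (α₂ * α₃ * u₀ ^ 2 + (α₂ ^ 2 + α₃ ^ 2 - α₂ * α₃) * u₀
            + (α₁ * α₂ + α₂ * α₃ + α₃ * α₁ - α₂ ^ 2 - α₃ ^ 2)) := by ring
    rw [key]
    exact dvd_sub (hdvdS.mul_right _) (hdvdc.mul_right _)
  -- the size bound : 6 D² < p ^ j  (over the reals, then over ℤ)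
  have hsize : (6 * (D : ℤ) ^ 2) < (p : ℤ) ^ j := by
    have hrk : 6 * (D : ℝ) ^ 2 < (p : ℝ) ^ k := by
      have hX0 : (0 : ℝ) < 20 * (D : ℝ) ^ 3 := by positivity
      have h1 : (20 * (D : ℝ) ^ 3)
          ≤ (p : ℝ) ^ (⌈Real.log (20 * (D : ℝ) ^ 3) / Real.log p⌉₊ : ℕ) := by
        have hlogb : Real.logb p (20 * (D : ℝ) ^ 3)
            = Real.log (20 * (D : ℝ) ^ 3) / Real.log p := rfl
        have h2 : (p : ℝ) ^ (Real.logb p (20 * (D : ℝ) ^ 3)) = 20 * (D : ℝ) ^ 3 :=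
          Real.rpow_logb hpR0 (by linarith) hX0
        calc (20 * (D : ℝ) ^ 3)
            = (p : ℝ) ^ (Real.logb p (20 * (D : ℝ) ^ 3)) := h2.symm
          _ ≤ (p : ℝ) ^ ((⌈Real.log (20 * (D : ℝ) ^ 3) / Real.log p⌉₊ : ℕ) : ℝ) := by
              apply Real.rpow_le_rpow_of_exponent_le (le_of_lt hpR1)
              rw [← hlogb]; exact Nat.le_ceil _
          _ = (p : ℝ) ^ (⌈Real.log (20 * (D : ℝ) ^ 3) / Real.log p⌉₊ : ℕ) := by
              rw [Real.rpow_natCast]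
      have h3 : (p : ℝ) ^ (⌈Real.log (20 * (D : ℝ) ^ 3) / Real.log p⌉₊ : ℕ) ≤ (p : ℝ) ^ k :=
        pow_le_pow_right₀ (le_of_lt hpR1) (by omega)
      have hD23 : (D : ℝ) ^ 2 ≤ (D : ℝ) ^ 3 := pow_le_pow_right₀ hDR (by norm_num)
      have hD3 : (0 : ℝ) < (D : ℝ) ^ 3 := by positivity
      linarith
    have hrm : 6 * (D : ℝ) ^ 2 < (p : ℝ) ^ m := by
      set Q : ℝ := (p : ℝ) ^ m with hQ_def
      have hQP : (p : ℝ) ≤ Q := le_self_pow₀ (le_of_lt hpR1) (by omega)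
      have hQ0 : (0 : ℝ) < Q := by positivity
      have hpn : ((p : ℝ) ^ ((n : ℝ) / 2)) ^ 2 = (p : ℝ) ^ n := by
        rw [← Real.rpow_natCast ((p : ℝ) ^ ((n : ℝ) / 2)) 2,
            ← Real.rpow_mul (le_of_lt hpR0)]
        norm_num
      have h2m : (p : ℝ) ^ n ≤ Q ^ 2 * (p : ℝ) := by
        have : (p : ℝ) ^ n ≤ (p : ℝ) ^ (2 * m + 1) :=
          pow_le_pow_right₀ (le_of_lt hpR1) (by omega)
        calc (p : ℝ) ^ n ≤ (p : ℝ) ^ (2 * m + 1) := this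
          _ = Q ^ 2 * (p : ℝ) := by rw [hQ_def]; ring
      have hQ3 : 400 * (D : ℝ) ^ 6 < Q ^ 3 := by
        have h4 : (20 * (D : ℝ) ^ 3) ^ 2 < ((p : ℝ) ^ ((n : ℝ) / 2)) ^ 2 := by
          have hX0 : (0 : ℝ) < 20 * (D : ℝ) ^ 3 := by positivity
          nlinarith
        rw [hpn] at h4
        have : Q ^ 2 * (p : ℝ) ≤ Q ^ 3 := by nlinarith
        nlinarith
      by_contra hcontra
      push_neg at hcontra
      have : Q ^ 3 ≤ (6 * (D : ℝ) ^ 2) ^ 3 :=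
        pow_le_pow_left₀ (le_of_lt hQ0) hcontra 3
      nlinarith [pow_pos (show (0:ℝ) < (D:ℝ) by linarith) 6]
    have hr : 6 * (D : ℝ) ^ 2 < (p : ℝ) ^ j := by
      rcases min_cases k m with ⟨h, _⟩ | ⟨h, _⟩ <;> rw [hj_def, h]
      · exact hrk
      · exact hrm
    exact_mod_cast hr
  -- N is small and nonnegative, hence N = 0
  obtain ⟨hl₁, hr₁⟩ := abs_le.mp h₁
  obtain ⟨hl₂, hr₂⟩ := abs_le.mp h₂
  obtain ⟨hl₃, hr₃⟩ := abs_le.mp h₃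
  have hb₁ : α₁ ^ 2 ≤ (D : ℤ) ^ 2 := by nlinarith
  have hb₂ : α₂ ^ 2 ≤ (D : ℤ) ^ 2 := by nlinarith
  have hb₃ : α₃ ^ 2 ≤ (D : ℤ) ^ 2 := by nlinarith
  have hN_nonneg : 0 ≤ N := by
    nlinarith [sq_nonneg (α₁ - α₂), sq_nonneg (α₂ - α₃), sq_nonneg (α₃ - α₁)]
  have hN_small : N ≤ 6 * (D : ℤ) ^ 2 := by
    nlinarith [sq_nonneg (α₁ + α₂), sq_nonneg (α₂ + α₃), sq_nonneg (α₃ + α₁)]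
  have hN0 : N = 0 := by
    by_contra hN
    have hNpos : 0 < N := lt_of_le_of_ne hN_nonneg (Ne.symm hN)
    have := Int.le_of_dvd hNpos hdvdN
    linarith
  have hsum : (α₁ - α₂) ^ 2 + ((α₂ - α₃) ^ 2 + (α₃ - α₁) ^ 2) = 0 := by
    linear_combination 2 * hN0
  have e1 : (α₁ - α₂) ^ 2 = 0 := by
    linarith [sq_nonneg (α₁ - α₂), sq_nonneg (α₂ - α₃), sq_nonneg (α₃ - α₁)]
  have e2 : (α₂ - α₃) ^ 2 = 0 := by
    linarith [sq_nonneg (α₁ - α₂), sq_nonneg (α₂ - α₃), sq_nonneg (α₃ - α₁)]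
  have f1 : α₁ = α₂ := by
    have := sq_eq_zero_iff.mp e1
    linarith
  have f2 : α₂ = α₃ := by
    have := sq_eq_zero_iff.mp e2
    linarith
  exact hne f1 f2
end

section
/- Let p > 3 be prime, Q₀ a positive integer with p ∣ Q₀, L ≥ 1, and Q₁, …, Q_L positive integers each coprime to Q₀. Let h₁, …, h_L be integers, and for each I ⊆ {1,…,L} set H_I := ∑_{i ∈ I} Q_i h_i. Define T := {H_I mod p : I ⊆ {1,…,L}}, μ(τ) := #{I : |I| even, H_I ≡ τ (mod p)} and ν(τ) := #{I : |I| odd, H_I ≡ τ (mod p)}. If 3 divides μ(τ) − ν(τ) for all τ ∈ T, then p divides h_i for some 1 ≤ i ≤ L. -/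
/-!
Let `K` be a field of characteristic `3` containing a primitive `p`-th root of unity `ζ`
(possible since `p ≠ 3`), and let `ψ(x) = ζ^x` be the corresponding additive character of
`ZMod p`. Expanding `∏ i, (1 - ψ (Q i * h i))` over subsets `I` and grouping by the residue
of `H_I` gives `∑ τ, (μ τ - ν τ) ψ τ`, which vanishes in characteristic `3`. Hence some factor
vanishes, i.e. `ψ (Q i * h i) = 1`, so `p ∣ Q i * h i`, and `p ∤ Q i` as `Q i` is coprime to `Q₀`.
This is the paper's norm argument read modulo a prime above `3`.
-/

open Finset

lemma AddChar.map_sum_eq_prod {A M ι : Type*} [AddCommMonoid A] [CommMonoid M]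
    (ψ : AddChar A M) (s : Finset ι) (c : ι → A) :
    ψ (∑ i ∈ s, c i) = ∏ i ∈ s, ψ (c i) :=
  map_prod ψ.toMonoidHom (fun i ↦ Multiplicative.ofAdd (c i)) s

section SignedSubsetCount

variable {ι A : Type*} [Fintype ι] [AddCommMonoid A]

noncomputable def signedSubsetCount (c : ι → A) (τ : A) : ℤ :=
  Nat.card {I : Finset ι // Even I.card ∧ ∑ i ∈ I, c i = τ} -
    Nat.card {I : Finset ι // Odd I.card ∧ ∑ i ∈ I, c i = τ}

lemma signedSubsetCount_eq_sum [DecidableEq A] (c : ι → A) (τ : A) :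
    signedSubsetCount c τ = ∑ I with ∑ i ∈ I, c i = τ, (-1 : ℤ) ^ #I := by
  classical
  simp only [signedSubsetCount, Nat.card_eq_fintype_card, Fintype.card_subtype]
  rw [← Finset.sum_filter_add_sum_filter_not _ (fun I : Finset ι ↦ Even #I), filter_filter,
    filter_filter, sum_congr rfl fun I hI ↦ (mem_filter.1 hI).2.2.neg_one_pow,
    sum_congr rfl fun I hI ↦ (Nat.not_even_iff_odd.1 (mem_filter.1 hI).2.2).neg_one_pow]
  simp only [sum_const, nsmul_eq_mul, mul_one, mul_neg, Nat.not_even_iff_odd, ← sub_eq_add_neg]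
  congr 3 <;> ext <;> simp [and_comm]

lemma prod_one_sub_addChar_eq_sum {R : Type*} [CommRing R] [Fintype A] [DecidableEq A]
    (ψ : AddChar A R) (c : ι → A) :
    ∏ i, (1 - ψ (c i)) = ∑ τ, (signedSubsetCount c τ : R) * ψ τ := by
  have expand : ∏ i, (1 - ψ (c i)) = ∑ I : Finset ι, (-1) ^ #I * ψ (∑ i ∈ I, c i) := by
    classical simp [prod_sub, ψ.map_sum_eq_prod]
  rw [expand, ← sum_fiberwise univ (fun I : Finset ι ↦ ∑ i ∈ I, c i)]
  refine sum_congr rfl fun τ _ ↦ ?_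
  rw [signedSubsetCount_eq_sum, Int.cast_sum, sum_mul]
  refine sum_congr rfl fun I hI ↦ ?_
  rw [(mem_filter.1 hI).2, Int.cast_pow, Int.cast_neg, Int.cast_one]

end SignedSubsetCount

theorem exists_eq_zero_of_dvd_signedSubsetCount {ι : Type*} [Fintype ι] {n q : ℕ} [NeZero n]
    [Fact q.Prime] [NeZero (n : ZMod q)] (c : ι → ZMod n)
    (hdvd : ∀ τ, (q : ℤ) ∣ signedSubsetCount c τ) : ∃ i, c i = 0 := by
  let K := CyclotomicField n (ZMod q)
  have hζ := IsCyclotomicExtension.zeta_spec n (ZMod q) K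
  let ψ := AddChar.zmodChar n hζ.pow_eq_one
  have hq : (q : K) = 0 := by
    rw [← map_natCast (algebraMap (ZMod q) K), ZMod.natCast_self, map_zero]
  have hprod : ∏ i, (1 - ψ (c i)) = 0 := by
    rw [prod_one_sub_addChar_eq_sum]
    refine sum_eq_zero fun τ _ ↦ ?_
    obtain ⟨m, hm⟩ := hdvd τ
    rw [hm, Int.cast_mul, Int.cast_natCast, hq, zero_mul, zero_mul]
  obtain ⟨i, -, hi⟩ := prod_eq_zero_iff.1 hprod
  exact ⟨i, (AddChar.zmodChar_primitive_of_primitive_root n hζ).zmod_char_eq_one_iff _ _ |>.1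
    (sub_eq_zero.1 hi).symm⟩

theorem exists_p_dvd_of_multiplicity_congruence_general (p : ℕ) (hp : p.Prime) (hp3 : 3 < p)
    (Q₀ : ℕ) (hpQ₀ : p ∣ Q₀) (L : ℕ)
    (Q : Fin L → ℕ) (hQco : ∀ i, Nat.Coprime (Q i) Q₀)
    (h : Fin L → ℤ)
    (hyp : ∀ τ : ZMod p,
      (3 : ℤ) ∣
        ((Nat.card {I : Finset (Fin L) //
            Even I.card ∧ ((∑ i ∈ I, (Q i : ℤ) * h i : ℤ) : ZMod p) = τ} : ℤ) -
         (Nat.card {I : Finset (Fin L) //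
            Odd I.card ∧ ((∑ i ∈ I, (Q i : ℤ) * h i : ℤ) : ZMod p) = τ} : ℤ))) :
    ∃ i, (p : ℤ) ∣ h i := by
  have : NeZero p := ⟨hp.ne_zero⟩
  have : NeZero (p : ZMod 3) := ⟨fun h3 ↦ hp3.ne <|
    (Nat.prime_dvd_prime_iff_eq Nat.prime_three hp).1 ((ZMod.natCast_eq_zero_iff p 3).1 h3)⟩
  simp only [Int.cast_sum] at hyp
  obtain ⟨i, hi⟩ := exists_eq_zero_of_dvd_signedSubsetCount _ hyp
  rw [ZMod.intCast_zmod_eq_zero_iff_dvd] at hi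
  have hpQ : ¬ (p : ℤ) ∣ Q i := fun hpQ ↦ hp.one_lt.ne' <|
    ((hQco i).coprime_dvd_left (Int.natCast_dvd_natCast.1 hpQ)).eq_one_of_dvd hpQ₀
  exact ⟨i, (Int.Prime.dvd_mul' hp hi).resolve_left hpQ⟩

/-- Let `p > 3` be prime, `Q₀` positive with `p ∣ Q₀`, `L ≥ 1`, and `Q₁,…,Q_L` positive
integers coprime to `Q₀`. Given integers `h₁,…,h_L`, set `H_I := ∑_{i ∈ I} Q_i h_i`.
If, for every residue `τ` mod `p`, `3` divides
`#{I : |I| even, H_I ≡ τ} − #{I : |I| odd, H_I ≡ τ}`, then `p ∣ h_i` for some `i`. -/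
theorem exists_p_dvd_of_multiplicity_congruence (p : ℕ) (hp : p.Prime) (hp3 : 3 < p)
    (Q₀ : ℕ) (hQ₀ : 0 < Q₀) (hpQ₀ : p ∣ Q₀) (L : ℕ) (hL : 1 ≤ L)
    (Q : Fin L → ℕ) (hQpos : ∀ i, 0 < Q i) (hQco : ∀ i, Nat.Coprime (Q i) Q₀)
    (h : Fin L → ℤ)
    (hyp : ∀ τ : ZMod p,
      (3 : ℤ) ∣
        ((Nat.card {I : Finset (Fin L) //
            Even I.card ∧ ((∑ i ∈ I, (Q i : ℤ) * h i : ℤ) : ZMod p) = τ} : ℤ) -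
         (Nat.card {I : Finset (Fin L) //
            Odd I.card ∧ ((∑ i ∈ I, (Q i : ℤ) * h i : ℤ) : ZMod p) = τ} : ℤ))) :
    ∃ i, (p : ℤ) ∣ h i :=
  exists_p_dvd_of_multiplicity_congruence_general p hp hp3 Q₀ hpQ₀ L Q hQco h hyp
end
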